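/- Let T be a plane tree with at least one internal node and let T' = swap(T) be its lodestar swap. Then lthorn(T) = lthorn(T') and rthorn(T) = rthorn(T'). -/

import Mathlib

/-! ## Plane trees -/

/-- A plane tree: a root together with an ordered (left-to-right) list of subtrees.
A node is a *leaf* if it has no children, and *internal* otherwise. -/
inductive PTree : Type where
  | node : List PTree → PTree


namespace Luka

/-! ## Łukasiewicz paths

A path is encoded by its list of step increments: the step `(1,k)` (an up-step `U_k` of
degree `k`) is encoded by `k : ℤ` with `k ≥ 0`, and the down step `D = (1,-1)` by `-1`. -/

/-- `P` is a Łukasiewicz path: it is nonempty, uses steps `(1,k)` with `k ≥ -1`,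
stays (weakly) above the `x`-axis before its last step, and ends at height `-1`
(so that it goes strictly below the axis only at the last step, which is forced
to be the down-step `D`). -/
def IsLukas (P : List ℤ) : Prop :=
  P ≠ [] ∧ (∀ s ∈ P, -1 ≤ s) ∧ (∀ n, n < P.length → 0 ≤ (P.take n).sum) ∧ P.sum = -1

/-- The degrees of the up-steps of `P`, from left to right (the *profile* of `P`). -/
def upDegs (P : List ℤ) : List ℕ := (P.filter (fun s => 0 ≤ s)).map Int.toNat

/-- The profile multiset `𝔐(P)`: the multiset of degrees of the up-steps of `P`. -/
def profileM (P : List ℤ) : Multiset ℕ := (upDegs P : Multiset ℕ)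

/-- The degree of the first up-step of `P`, if any. -/
def firstUp? (P : List ℤ) : Option ℕ := (upDegs P).head?

/-- The degree of the last up-step of `P`, if any. -/
def lastUp? (P : List ℤ) : Option ℕ := (upDegs P).getLast?

/-- Auxiliary: starting from height `h`, record the starting height of every up-step. -/
def areaVecAux : ℤ → List ℤ → List ℤ
  | _, [] => []
  | h, s :: rest => (if 0 ≤ s then [h] else []) ++ areaVecAux (h + s) rest

/-- The area vector `Area(P)`: the `i`-th entry is the `y`-coordinate of the starting
point of the `i`-th up-step of `P`. -/
def areaVec (P : List ℤ) : List ℤ := areaVecAux 0 P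

/-- `area(P)`: the sum of the entries of the area vector (entries of a Łukasiewicz
path are nonnegative, so taking `Int.toNat` entrywise is harmless). -/
def area (P : List ℤ) : ℕ := ((areaVec P).map Int.toNat).sum

/-- Auxiliary computation of the depth values: `cur` is the depth value of the previous
step (`0` initially), and `stack` holds the pending depth values of the future matching
down-steps (top of the stack = value for the next matching down-step to come).
Reading an up-step `U_k` whose value is `cur` (inherited from the previous step) pushes
the values `cur+1, …, cur+k` for its `k` matching down-steps (its first matching
down-step, which crosses its topmost interior level, gets `cur+1`, etc.); reading a
down-step pops its value.  The list returned records the value `d_i` of each up-step,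
from left to right. -/
def depthVecAux : ℕ → List ℕ → List ℤ → List ℕ
  | _, _, [] => []
  | cur, stack, s :: rest =>
    if 0 ≤ s then
      cur :: depthVecAux cur ((List.range s.toNat).map (fun i => cur + i + 1) ++ stack) rest
    else
      match stack with
      | [] => depthVecAux cur [] rest
      | v :: st => depthVecAux v st rest

/-- The depth vector `Depth(P)`: the values `d_i` at the up-steps of `P`, left to right. -/
def depthVec (P : List ℤ) : List ℕ := depthVecAux 0 [] P

/-- `depth(P)`: the sum of the entries of the depth vector. -/
def depth (P : List ℤ) : ℕ := (depthVec P).sum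

/-- `P ∈ 𝓛_M`. -/
def MemL (M : Multiset ℕ) (P : List ℤ) : Prop := IsLukas P ∧ profileM P = M

/-- `P ∈ 𝓛_{a,M}`: first up-step of degree `a`, profile multiset `M ⊎ {a}`. -/
def MemLa (a : ℕ) (M : Multiset ℕ) (P : List ℤ) : Prop :=
  IsLukas P ∧ firstUp? P = some a ∧ profileM P = a ::ₘ M

/-- `P ∈ 𝓛_{M,b}`: last up-step of degree `b`, profile multiset `M ⊎ {b}`. -/
def MemLb (M : Multiset ℕ) (b : ℕ) (P : List ℤ) : Prop :=
  IsLukas P ∧ lastUp? P = some b ∧ profileM P = b ::ₘ M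

/-- `P ∈ 𝓛_{a,M,b}`: first up-step of degree `a`, last up-step of degree `b`,
profile multiset `M ⊎ {a, b}`. -/
def MemLab (a : ℕ) (M : Multiset ℕ) (b : ℕ) (P : List ℤ) : Prop :=
  IsLukas P ∧ firstUp? P = some a ∧ lastUp? P = some b ∧ profileM P = a ::ₘ b ::ₘ M

/-! ## Plane-tree statistics -/

/-- The (ordered) children of the root of a plane tree. -/
def children : PTree → List PTree
  | .node ts => ts

/-- The degree of (the root of) a plane tree: its number of children. -/
def numChildren (t : PTree) : ℕ := (children t).length

mutual
/-- Number of internal nodes of a plane tree. -/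
def internCount : PTree → ℕ
  | .node [] => 0
  | .node (t :: ts) => 1 + internCountL (t :: ts)
def internCountL : List PTree → ℕ
  | [] => 0
  | t :: ts => internCount t + internCountL ts
end

mutual
/-- `lthornT T` = the sum of `lthorn(u)` over all internal nodes `u` of `T`, where
`lthorn(u)` is the number of descending edges of strict ancestors `v` of `u` lying to
the left of the path from `v` to `u`.  (Every internal node of the subtree rooted at
the `i`-th child (0-indexed) of a node gains `i` left thorns from that node.) -/
def lthornT : PTree → ℕ
  | .node ts => lthornL 0 ts
def lthornL : ℕ → List PTree → ℕ
  | _, [] => 0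
  | i, t :: ts => lthornT t + i * internCount t + lthornL (i + 1) ts
end

mutual
/-- `rthornT T` = the sum of `rthorn(u)` over all internal nodes `u` of `T`, where
`rthorn(u)` is the number of descending edges of strict ancestors `v` of `u` lying to
the right of the path from `v` to `u`. -/
def rthornT : PTree → ℕ
  | .node ts => rthornL ts
def rthornL : List PTree → ℕ
  | [] => 0
  | t :: ts => rthornT t + ts.length * internCount t + rthornL ts
end

mutual
/-- The list of the values `lthorn(u)` for the internal nodes `u` of `T`, in
contour-walk (preorder) order. -/
def lthornList : PTree → List ℕ
  | .node [] => []
  | .node (t :: ts) => 0 :: lthornLL 0 (t :: ts)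
def lthornLL : ℕ → List PTree → List ℕ
  | _, [] => []
  | i, t :: ts => (lthornList t).map (· + i) ++ lthornLL (i + 1) ts
end

mutual
/-- The list of the values `rthorn(u)` for the internal nodes `u` of `T`, in
contour-walk (preorder) order. -/
def rthornList : PTree → List ℕ
  | .node [] => []
  | .node (t :: ts) => 0 :: rthornLL (t :: ts)
def rthornLL : List PTree → List ℕ
  | [] => []
  | t :: ts => (rthornList t).map (· + ts.length) ++ rthornLL ts
end

/-! ## The bijections `λ` and `τ` -/

mutual
/-- `λ`: record each node of the tree at its first visit in the left-to-right contour
walk: `U_k` (i.e. `k`) for an internal node with `k+1` children, `D` (i.e. `-1`)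
for a leaf. -/
def lambdaT : PTree → List ℤ
  | .node ts => ((ts.length : ℤ) - 1) :: lambdaL ts
def lambdaL : List PTree → List ℤ
  | [] => []
  | t :: ts => lambdaT t ++ lambdaL ts
end

/-- Auxiliary for `τ`: reading the path from right to left, maintain the stack of the
already-built subtrees (in left-to-right order); a down-step `D` creates a leaf and an
up-step `U_k` grabs the `k+1` topmost subtrees as its children.  This builds the same
tree as the left-to-right "leftmost bud" construction. -/
def tauStack (P : List ℤ) : List PTree :=
  P.foldr (fun s st =>
    if s < 0 then PTree.node [] :: st
    else PTree.node (st.take (s.toNat + 1)) :: st.drop (s.toNat + 1)) []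

/-- `τ`: the plane tree associated with a Łukasiewicz path. -/
def tau (P : List ℤ) : PTree := (tauStack P).headD (.node [])

mutual
/-- The mirror of a plane tree: reverse the left-to-right order of the children of
every internal node. -/
def mir : PTree → PTree
  | .node ts => .node (mirL ts).reverse
def mirL : List PTree → List PTree
  | [] => []
  | t :: ts => mir t :: mirL ts
end

mutual
/-- The subtrees rooted at the internal nodes of `T`, in contour-walk (preorder)
order. -/
def internalSubtrees : PTree → List PTree
  | .node [] => []
  | .node (t :: ts) => .node (t :: ts) :: internalSubtreesL (t :: ts)
def internalSubtreesL : List PTree → List PTree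
  | [] => []
  | t :: ts => internalSubtrees t ++ internalSubtreesL ts
end

/-- The multiset of degrees of the non-root internal nodes of `T`. -/
def nonRootInternalDegs (T : PTree) : Multiset ℕ :=
  (((internalSubtreesL (children T)).map numChildren : List ℕ) : Multiset ℕ)

/-! ## Lodestars and the lodestar swap -/

/-- A node is a lodestar-type node if it is internal and all its children are leaves. -/
def isLodestarNode (t : PTree) : Bool :=
  !(children t).isEmpty && (children t).all (fun c => (children c).isEmpty)

mutual
/-- The subtree rooted at the *left lodestar* of `T`: the first internal node, in
contour-walk (preorder) order, all of whose children are leaves (if it exists). -/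
def leftLode? : PTree → Option PTree
  | .node ts =>
    if isLodestarNode (.node ts) then some (.node ts) else leftLodeL? ts
def leftLodeL? : List PTree → Option PTree
  | [] => none
  | t :: ts =>
    match leftLode? t with
    | some r => some r
    | none => leftLodeL? ts
end

mutual
/-- The subtree rooted at the *right lodestar* of `T`: the last internal node, in
contour-walk (preorder) order, all of whose children are leaves (if it exists). -/
def rightLode? : PTree → Option PTree
  | .node ts =>
    match rightLodeL? ts with
    | some r => some r
    | none => if isLodestarNode (.node ts) then some (.node ts) else none
def rightLodeL? : List PTree → Option PTree
  | [] => none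
  | t :: ts =>
    match rightLodeL? ts with
    | some r => some r
    | none => rightLode? t
end

mutual
/-- Replace the left lodestar of `T` (first preorder all-leaf-children internal node)
by the tree `r`; `none` if `T` has no internal node. -/
def replF : PTree → PTree → Option PTree
  | r, .node ts =>
    if isLodestarNode (.node ts) then some r
    else (replFL r ts).map PTree.node
def replFL : PTree → List PTree → Option (List PTree)
  | _, [] => none
  | r, t :: ts =>
    match replF r t with
    | some t' => some (t' :: ts)
    | none => (replFL r ts).map (t :: ·)
end

mutual
/-- Replace the right lodestar of `T` (last preorder all-leaf-children internal node)
by the tree `r`; `none` if `T` has no internal node. -/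
def replL : PTree → PTree → Option PTree
  | r, .node ts =>
    match replLL r ts with
    | some ts' => some (.node ts')
    | none => if isLodestarNode (.node ts) then some r else none
def replLL : PTree → List PTree → Option (List PTree)
  | _, [] => none
  | r, t :: ts =>
    match replLL r ts with
    | some ts' => some (t :: ts')
    | none => (replL r t).map (· :: ts)
end

/-- The lodestar swap: exchange the subtrees rooted at the left lodestar and the
right lodestar of `T` (each a node together with its pendant leaves). -/
def lodeSwap (T : PTree) : PTree :=
  match leftLode? T, rightLode? T with
  | some L, some R => ((replF R T).bind (replL L)).getD T
  | _, _ => T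

/- A lodestar together with its pendant leaves is a corolla: one internal node and no thorns.
Since `internCount`, `lthornT` and `rthornT` of a tree are determined by the same three statistics
of its subtrees (and the number of children of each node), replacing one corolla by another
changes none of them. -/

def thornStats (t : PTree) : ℕ × ℕ × ℕ := (internCount t, lthornT t, rthornT t)

def thornStatsL (ts : List PTree) : ℕ × ℕ × (ℕ → ℕ) × ℕ :=
  (ts.length, internCountL ts, (lthornL · ts), rthornL ts)

theorem thornStatsL_cons_congr_left {t t' : PTree} (h : thornStats t' = thornStats t)
    (ts : List PTree) : thornStatsL (t' :: ts) = thornStatsL (t :: ts) := by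
  simp only [thornStats, Prod.mk.injEq] at h
  simp [thornStatsL, internCountL, lthornL, rthornL, h]

theorem thornStatsL_cons_congr_right (t : PTree) {ts ts' : List PTree}
    (h : thornStatsL ts' = thornStatsL ts) : thornStatsL (t :: ts') = thornStatsL (t :: ts) := by
  simp only [thornStatsL, Prod.mk.injEq] at h
  obtain ⟨hlen, hint, hl, hr⟩ := h
  simp only [thornStatsL, Prod.mk.injEq, List.length_cons, internCountL, lthornL, rthornL]
  exact ⟨by rw [hlen], by rw [hint], funext fun i => by rw [congrFun hl (i + 1)],
    by rw [hlen, hr]⟩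

theorem thornStats_node_congr {ts ts' : List PTree} (h : thornStatsL ts' = thornStatsL ts) :
    thornStats (.node ts') = thornStats (.node ts) := by
  simp only [thornStatsL, Prod.mk.injEq] at h
  obtain ⟨hlen, hint, hl, hr⟩ := h
  rcases ts with _ | ⟨t, ts⟩ <;> rcases ts' with _ | ⟨t', ts'⟩
  · rfl
  · simp at hlen
  · simp at hlen
  · simp [thornStats, internCount, lthornT, rthornT, hint, congrFun hl 0, hr]

theorem thornStatsL_replicate_leaf (n : ℕ) :
    thornStatsL (List.replicate n (.node [])) = (n, 0, fun _ => 0, 0) := by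
  induction n with
  | zero => rfl
  | succ n ih =>
    simp only [thornStatsL, Prod.mk.injEq] at ih
    simp [thornStatsL, List.replicate_succ, internCountL, lthornL, rthornL, internCount,
      lthornT, rthornT, ih, congrFun ih.2.2.1]

theorem eq_corolla_of_isLodestarNode {t : PTree} (h : isLodestarNode t = true) :
    ∃ n, t = .node (List.replicate (n + 1) (.node [])) := by
  obtain ⟨ts⟩ := t
  simp only [isLodestarNode, children, Bool.and_eq_true, Bool.not_eq_true',
    List.isEmpty_eq_false_iff, List.all_eq_true] at h
  obtain ⟨hne, hleaves⟩ := h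
  obtain ⟨n, hn⟩ := Nat.exists_eq_succ_of_ne_zero (List.length_pos_iff.mpr hne).ne'
  refine ⟨n, congrArg PTree.node (List.eq_replicate_iff.mpr ⟨hn, fun c hc => ?_⟩)⟩
  obtain ⟨cs⟩ := c
  simpa [children] using hleaves _ hc

theorem thornStats_of_isLodestarNode {t : PTree} (h : isLodestarNode t = true) :
    thornStats t = (1, 0, 0) := by
  obtain ⟨n, rfl⟩ := eq_corolla_of_isLodestarNode h
  have := thornStatsL_replicate_leaf (n + 1)
  simp only [thornStatsL, Prod.mk.injEq, List.replicate_succ] at this ⊢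
  simp [thornStats, internCount, lthornT, rthornT, this, congrFun this.2.2.1]

mutual
theorem isLodestarNode_of_leftLode?_eq_some :
    ∀ {T L : PTree}, leftLode? T = some L → isLodestarNode L = true
  | .node ts, L, h => by
    rw [leftLode?] at h
    split at h
    · cases h; assumption
    · exact isLodestarNode_of_leftLodeL?_eq_some h
theorem isLodestarNode_of_leftLodeL?_eq_some :
    ∀ {ts : List PTree} {L : PTree}, leftLodeL? ts = some L → isLodestarNode L = true
  | t :: ts, L, h => by
    rw [leftLodeL?] at h
    split at h
    · cases h; exact isLodestarNode_of_leftLode?_eq_some (by assumption)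
    · exact isLodestarNode_of_leftLodeL?_eq_some h
end

mutual
theorem isLodestarNode_of_rightLode?_eq_some :
    ∀ {T L : PTree}, rightLode? T = some L → isLodestarNode L = true
  | .node ts, L, h => by
    rw [rightLode?] at h
    split at h
    · cases h; exact isLodestarNode_of_rightLodeL?_eq_some (by assumption)
    · split at h
      · cases h; assumption
      · cases h
theorem isLodestarNode_of_rightLodeL?_eq_some :
    ∀ {ts : List PTree} {L : PTree}, rightLodeL? ts = some L → isLodestarNode L = true
  | t :: ts, L, h => by
    rw [rightLodeL?] at h
    split at h
    · cases h; exact isLodestarNode_of_rightLodeL?_eq_some (by assumption)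
    · exact isLodestarNode_of_rightLode?_eq_some h
end

mutual
theorem thornStats_replF {r : PTree} (hr : thornStats r = (1, 0, 0)) :
    ∀ {T T' : PTree}, replF r T = some T' → thornStats T' = thornStats T
  | .node ts, T', h => by
    rw [replF] at h
    split at h
    · cases h
      rw [hr, thornStats_of_isLodestarNode (by assumption)]
    · obtain ⟨ts', hts', rfl⟩ := Option.map_eq_some_iff.mp h
      exact thornStats_node_congr (thornStatsL_replFL hr hts')
theorem thornStatsL_replFL {r : PTree} (hr : thornStats r = (1, 0, 0)) :
    ∀ {ts ts' : List PTree}, replFL r ts = some ts' → thornStatsL ts' = thornStatsL ts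
  | t :: ts, ts', h => by
    rw [replFL] at h
    split at h
    · cases h
      exact thornStatsL_cons_congr_left (thornStats_replF hr (by assumption)) ts
    · obtain ⟨ts'', hts'', rfl⟩ := Option.map_eq_some_iff.mp h
      exact thornStatsL_cons_congr_right t (thornStatsL_replFL hr hts'')
end

mutual
theorem thornStats_replL {r : PTree} (hr : thornStats r = (1, 0, 0)) :
    ∀ {T T' : PTree}, replL r T = some T' → thornStats T' = thornStats T
  | .node ts, T', h => by
    rw [replL] at h
    split at h
    · cases h
      exact thornStats_node_congr (thornStatsL_replLL hr (by assumption))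
    · split at h
      · cases h
        rw [hr, thornStats_of_isLodestarNode (by assumption)]
      · cases h
theorem thornStatsL_replLL {r : PTree} (hr : thornStats r = (1, 0, 0)) :
    ∀ {ts ts' : List PTree}, replLL r ts = some ts' → thornStatsL ts' = thornStatsL ts
  | t :: ts, ts', h => by
    rw [replLL] at h
    split at h
    · cases h
      exact thornStatsL_cons_congr_right t (thornStatsL_replLL hr (by assumption))
    · obtain ⟨t', ht', rfl⟩ := Option.map_eq_some_iff.mp h
      exact thornStatsL_cons_congr_left (thornStats_replL hr ht') ts
end

theorem thornStats_lodeSwap (T : PTree) : thornStats (lodeSwap T) = thornStats T := by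
  unfold lodeSwap
  rcases hL : leftLode? T with _ | L <;> rcases hR : rightLode? T with _ | R
  any_goals rfl
  simp only
  rcases h1 : replF R T with _ | T1
  · rfl
  rcases h2 : replL L T1 with _ | T2
  · simp only [Option.bind_some, h2, Option.getD_none]
  simp only [Option.bind_some, h2, Option.getD_some]
  have hRstats := thornStats_of_isLodestarNode (isLodestarNode_of_rightLode?_eq_some hR)
  have hLstats := thornStats_of_isLodestarNode (isLodestarNode_of_leftLode?_eq_some hL)
  exact (thornStats_replL hLstats h2).trans (thornStats_replF hRstats h1)

end Luka

open Luka in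
/-- **Proposition 4.4.**  Let `T` be a plane tree with at least one internal node
(i.e. `T` is not a single leaf) and `T' = swap(T)` its lodestar swap.  Then
`lthorn(T) = lthorn(T')` and `rthorn(T) = rthorn(T')`. -/
theorem lthorn_rthorn_lodeSwap (T : PTree) (hT : T ≠ .node []) :
    lthornT T = lthornT (lodeSwap T) ∧ rthornT T = rthornT (lodeSwap T) := by
  have h := thornStats_lodeSwap T
  simp only [thornStats, Prod.mk.injEq] at h
  exact ⟨h.2.1.symm, h.2.2.symm⟩
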